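/- Kriging limit theorem for random walk smoothing: with Γ = λ^{−1}I, Σ = Π^{1/2} Δ̃⁺ Π^{1/2}, X = Π^{1/2}1_n, and M_δ = (XX'/δ + Σ)(XX'/δ + Σ + Γ)^{−1}, the limit as δ → 0⁺ of M_δ(Y* − μX) + μX equals (I + λ^{−1} Π^{−1/2} Δ̃ Π^{−1/2})^{−1} Y*, the random walk predictor. -/

import Mathlib

/-!
Write `C = Σ + λ⁻¹ 1`, which is positive definite. Then
`M_δ = (C + XXᵀ/δ - λ⁻¹ 1)(C + XXᵀ/δ)⁻¹ = 1 - λ⁻¹ (XXᵀ/δ + C)⁻¹`, and by the Sherman–Morrison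
formula `(XXᵀ/δ + C)⁻¹ → G = C⁻¹ - (XᵀC⁻¹X)⁻¹ C⁻¹XXᵀC⁻¹` as `δ → 0⁺`. Since `G X = 0`, the
`μ`-terms cancel in the limit, which is `(1 - λ⁻¹ G) Y*`.

For `W = Π^{-1/2} Δ̃ Π^{-1/2}`, the spectral decomposition gives `W X = 0` and, as `Δ̃ Δ̃⁺` is the
orthogonal projection onto `1⊥`, `W Σ = 1 - r Xᵀ` for some vector `r`. Hence
`1 + λ⁻¹ W = W C + r Xᵀ`, and `C G = 1 - (XᵀC⁻¹X)⁻¹ XXᵀC⁻¹` together with `Xᵀ G = 0` give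
`(1 + λ⁻¹ W) G = W`, that is `(1 + λ⁻¹ W)⁻¹ = 1 - λ⁻¹ G`.
-/

open Matrix Filter Topology

namespace Matrix

variable {ι : Type*} [Fintype ι]

lemma vecMulVec_mul_mul_vecMulVec {R : Type*} [CommSemiring R] (u v : ι → R)
    (M : Matrix ι ι R) :
    vecMulVec u v * M * vecMulVec u v = (v ⬝ᵥ M *ᵥ u) • vecMulVec u v := by
  rw [Matrix.mul_assoc, mul_vecMulVec, vecMulVec_mul_vecMulVec, vecMulVec_smul]

lemma PosDef.smul_vecMulVec_self_add {C : Matrix ι ι ℝ} (hC : C.PosDef) {t : ℝ} (ht : 0 ≤ t)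
    (x : ι → ℝ) : (t • vecMulVec x x + C).PosDef := by
  have hx : (vecMulVec x x).PosSemidef := by simpa using posSemidef_vecMulVec_self_star x
  exact PosDef.posSemidef_add (hx.smul ht) hC

variable [DecidableEq ι]

section RankOneUpdate

variable {K : Type*} [Field K] (C : Matrix ι ι K) (u v : ι → K)

noncomputable def rankOneInvLimit : Matrix ι ι K :=
  C⁻¹ - (v ⬝ᵥ C⁻¹ *ᵥ u)⁻¹ • (C⁻¹ * vecMulVec u v * C⁻¹)

variable {C u v}

lemma rankOneInvLimit_mulVec (hs : v ⬝ᵥ C⁻¹ *ᵥ u ≠ 0) : rankOneInvLimit C u v *ᵥ u = 0 := by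
  rw [rankOneInvLimit, sub_mulVec, smul_mulVec, ← mulVec_mulVec, ← mulVec_mulVec,
    vecMulVec_mulVec, op_smul_eq_smul, mulVec_smul, smul_smul, inv_mul_cancel₀ hs, one_smul,
    sub_self]

lemma vecMul_rankOneInvLimit (hs : v ⬝ᵥ C⁻¹ *ᵥ u ≠ 0) : v ᵥ* rankOneInvLimit C u v = 0 := by
  rw [rankOneInvLimit, vecMul_sub, vecMul_smul, ← vecMul_vecMul, ← vecMul_vecMul,
    vecMul_vecMulVec, ← dotProduct_mulVec, smul_vecMul, smul_smul, inv_mul_cancel₀ hs, one_smul,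
    sub_self]

lemma mul_rankOneInvLimit (hC : IsUnit C) :
    C * rankOneInvLimit C u v = 1 - (v ⬝ᵥ C⁻¹ *ᵥ u)⁻¹ • vecMulVec u (v ᵥ* C⁻¹) := by
  rw [rankOneInvLimit, Matrix.mul_sub, mul_smul_comm, ← Matrix.mul_assoc, ← Matrix.mul_assoc,
    mul_nonsing_inv _ ((isUnit_iff_isUnit_det C).mp hC), Matrix.one_mul, vecMulVec_mul]

/-- Sherman–Morrison formula, with the scalar normalised so that `t = ∞` gives
`rankOneInvLimit C u v`. -/
lemma inv_smul_vecMulVec_add (hC : IsUnit C) {t : K} (ht : t ≠ 0)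
    (hts : t⁻¹ + v ⬝ᵥ C⁻¹ *ᵥ u ≠ 0) :
    (t • vecMulVec u v + C)⁻¹ =
      C⁻¹ - (t⁻¹ + v ⬝ᵥ C⁻¹ *ᵥ u)⁻¹ • (C⁻¹ * vecMulVec u v * C⁻¹) := by
  set s := v ⬝ᵥ C⁻¹ *ᵥ u
  have hCC : C * C⁻¹ = 1 := mul_nonsing_inv _ ((isUnit_iff_isUnit_det C).mp hC)
  have hcoeff : t - t * s * (t⁻¹ + s)⁻¹ - (t⁻¹ + s)⁻¹ = 0 := by
    have : t * s + 1 = t * (t⁻¹ + s) := by rw [mul_add, mul_inv_cancel₀ ht, add_comm]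
    rw [sub_sub, ← add_one_mul, this, mul_inv_cancel_right₀ hts, sub_self]
  apply inv_eq_right_inv
  calc (t • vecMulVec u v + C) * (C⁻¹ - (t⁻¹ + s)⁻¹ • (C⁻¹ * vecMulVec u v * C⁻¹))
      = 1 + (t - t * s * (t⁻¹ + s)⁻¹ - (t⁻¹ + s)⁻¹) • (vecMulVec u v * C⁻¹) := by
        simp only [Matrix.add_mul, Matrix.mul_sub, smul_mul_assoc, mul_smul_comm,
          ← Matrix.mul_assoc, hCC, Matrix.one_mul, vecMulVec_mul_mul_vecMulVec]
        module
    _ = 1 := by rw [hcoeff, zero_smul, add_zero]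

lemma inv_one_add_smul_eq_sub_smul_rankOneInvLimit {S W : Matrix ι ι K} {c : K} {r : ι → K}
    (hC : IsUnit (S + c • 1)) (hs : v ⬝ᵥ (S + c • 1)⁻¹ *ᵥ u ≠ 0)
    (hWS : W * S = 1 - vecMulVec r v) (hWu : W *ᵥ u = 0) :
    (1 + c • W)⁻¹ = 1 - c • rankOneInvLimit (S + c • 1) u v := by
  have hW : (1 + c • W) * rankOneInvLimit (S + c • 1) u v = W := by
    have hsplit : 1 + c • W = W * (S + c • 1) + vecMulVec r v := by
      rw [Matrix.mul_add, hWS, mul_smul_comm, Matrix.mul_one]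
      abel
    rw [hsplit, Matrix.add_mul, Matrix.mul_assoc, mul_rankOneInvLimit hC, vecMulVec_mul,
      vecMul_rankOneInvLimit hs, vecMulVec_zero, add_zero, Matrix.mul_sub, Matrix.mul_one,
      mul_smul_comm, mul_vecMulVec, hWu, zero_vecMulVec, smul_zero, sub_zero]
  apply inv_eq_right_inv
  rw [Matrix.mul_sub, Matrix.mul_one, mul_smul_comm, hW, add_sub_cancel_right]

end RankOneUpdate

section OrthogonalDiagonalization

variable {K : Type*} [Field K] {U : Matrix ι ι K}

lemma transpose_mul_diagonal_mul_mul_transpose_mul_diagonal_mul (hU : U * Uᵀ = 1)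
    (f g : ι → K) :
    (Uᵀ * diagonal f * U) * (Uᵀ * diagonal g * U) = Uᵀ * diagonal (f * g) * U := by
  rw [Matrix.mul_assoc, ← Matrix.mul_assoc U, ← Matrix.mul_assoc U, hU, Matrix.one_mul,
    ← Matrix.mul_assoc, Matrix.mul_assoc _ (diagonal f), diagonal_mul_diagonal]
  rfl

lemma transpose_mul_diagonal_single_mul (k : ι) :
    Uᵀ * diagonal (Pi.single k 1) * U = vecMulVec (U k) (U k) := by
  rw [diagonal_single, single_eq_single_vecMulVec_single, mul_vecMulVec, vecMulVec_mul,
    mulVec_single_one, single_one_vecMul]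
  rfl

lemma transpose_mul_diagonal_mul_mulVec_row (hU : U * Uᵀ = 1) {d : ι → K} {k : ι}
    (hdk : d k = 0) : (Uᵀ * diagonal d * U) *ᵥ U k = 0 := by
  have hrow : U k = Uᵀ *ᵥ Pi.single k 1 := by rw [mulVec_single_one]; rfl
  rw [hrow, mulVec_mulVec, Matrix.mul_assoc, Matrix.mul_assoc, hU, Matrix.mul_one,
    ← mulVec_mulVec, diagonal_mulVec_single, hdk, zero_mul, Pi.single_zero, mulVec_zero]

lemma transpose_mul_diagonal_mul_mul_transpose_mul_diagonal_mul_of_mul_eq (hU : Uᵀ * U = 1)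
    {d d' : ι → K} {k : ι} (hdd : d * d' = 1 - Pi.single k 1) :
    (Uᵀ * diagonal d * U) * (Uᵀ * diagonal d' * U) = 1 - vecMulVec (U k) (U k) := by
  have hdiag : diagonal (1 - Pi.single k 1) = 1 - diagonal (Pi.single k (1 : K)) :=
    (diagonal_sub _ _).symm.trans (congrArg (· - _) diagonal_one)
  rw [transpose_mul_diagonal_mul_mul_transpose_mul_diagonal_mul (mul_eq_one_comm.mp hU), hdd,
    hdiag, Matrix.mul_sub, Matrix.sub_mul, Matrix.mul_one, hU, transpose_mul_diagonal_single_mul]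

variable {d : ι → K} {k : ι} {c : K} {x : ι → K}

lemma diagonal_inv_conj_mul_diagonal_conj {d' : ι → K} (hU : Uᵀ * U = 1)
    (hdd : d * d' = 1 - Pi.single k 1) (hrow : U k = fun _ => c) (hx : ∀ i, x i ≠ 0) :
    diagonal x⁻¹ * (Uᵀ * diagonal d * U) * diagonal x⁻¹ *
        (diagonal x * (Uᵀ * diagonal d' * U) * diagonal x) =
      1 - vecMulVec (c • diagonal x⁻¹ *ᵥ U k) x := by
  have hxx : diagonal x⁻¹ * diagonal x = 1 := by
    rw [diagonal_mul_diagonal, ← diagonal_one]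
    exact congrArg diagonal (funext fun i => inv_mul_cancel₀ (hx i))
  have hrowx : U k ᵥ* diagonal x = c • x := by
    rw [hrow]
    funext i
    simp [vecMul_diagonal]
  calc _ = diagonal x⁻¹ * ((Uᵀ * diagonal d * U) * (Uᵀ * diagonal d' * U)) * diagonal x := by
        simp only [Matrix.mul_assoc]
        rw [← Matrix.mul_assoc (diagonal x⁻¹) (diagonal x), hxx, Matrix.one_mul]
    _ = 1 - vecMulVec (c • diagonal x⁻¹ *ᵥ U k) x := by
        rw [transpose_mul_diagonal_mul_mul_transpose_mul_diagonal_mul_of_mul_eq hU hdd,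
          Matrix.mul_sub, Matrix.sub_mul, Matrix.mul_one, hxx, mul_vecMulVec, vecMulVec_mul,
          hrowx, vecMulVec_smul, smul_vecMulVec]

lemma diagonal_inv_conj_mulVec_self (hU : Uᵀ * U = 1) (hdk : d k = 0)
    (hrow : U k = fun _ => c) (hc : c ≠ 0) (hx : ∀ i, x i ≠ 0) :
    (diagonal x⁻¹ * (Uᵀ * diagonal d * U) * diagonal x⁻¹) *ᵥ x = 0 := by
  have hxrow : diagonal x⁻¹ *ᵥ x = c⁻¹ • U k := by
    rw [hrow]
    funext i
    simp [mulVec_diagonal, hc, hx i]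
  rw [← mulVec_mulVec, hxrow, ← mulVec_mulVec, mulVec_smul,
    transpose_mul_diagonal_mul_mulVec_row (mul_eq_one_comm.mp hU) hdk, smul_zero, mulVec_zero]

end OrthogonalDiagonalization

section Limits

variable {C : Matrix ι ι ℝ} {u v : ι → ℝ}

lemma tendsto_inv_smul_vecMulVec_add_atTop (hC : IsUnit C) (hs : v ⬝ᵥ C⁻¹ *ᵥ u ≠ 0) :
    Tendsto (fun t : ℝ => (t • vecMulVec u v + C)⁻¹) atTop (𝓝 (rankOneInvLimit C u v)) := by
  set s := v ⬝ᵥ C⁻¹ *ᵥ u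
  have hcoeff : Tendsto (fun t : ℝ => t⁻¹ + s) atTop (𝓝 s) := by
    simpa using tendsto_inv_atTop_zero.add_const s
  have hformula : Tendsto (fun t : ℝ => C⁻¹ - (t⁻¹ + s)⁻¹ • (C⁻¹ * vecMulVec u v * C⁻¹)) atTop
      (𝓝 (rankOneInvLimit C u v)) :=
    tendsto_const_nhds.sub ((hcoeff.inv₀ hs).smul_const _)
  refine hformula.congr' ?_
  filter_upwards [eventually_ne_atTop 0, hcoeff.eventually_ne hs] with t ht hts
  exact (inv_smul_vecMulVec_add hC ht hts).symm

lemma tendsto_mul_inv_add_smul_one_mulVec {α : Type*} {l : Filter α} {S : α → Matrix ι ι ℝ}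
    {G : Matrix ι ι ℝ} {c : ℝ} (hS : ∀ᶠ a in l, IsUnit (S a + c • 1))
    (hlim : Tendsto (fun a => (S a + c • 1)⁻¹) l (𝓝 G)) {x : ι → ℝ} (hGx : G *ᵥ x = 0)
    (y : ι → ℝ) (μ : ℝ) :
    Tendsto (fun a => (S a * (S a + c • 1)⁻¹) *ᵥ (y - μ • x) + μ • x) l
      (𝓝 ((1 - c • G) *ᵥ y)) := by
  have hinv : Tendsto (fun a => (S a + c • 1)⁻¹ *ᵥ (y - μ • x)) l (𝓝 (G *ᵥ (y - μ • x))) :=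
    ((continuous_id.matrix_mulVec continuous_const).tendsto G).comp hlim
  have hG : Tendsto (fun a => (y - μ • x) - c • (S a + c • 1)⁻¹ *ᵥ (y - μ • x) + μ • x) l
      (𝓝 ((y - μ • x) - c • G *ᵥ (y - μ • x) + μ • x)) :=
    (tendsto_const_nhds.sub (hinv.const_smul c)).add tendsto_const_nhds
  convert hG.congr' ?_ using 2
  · rw [sub_mulVec, one_mulVec, smul_mulVec, mulVec_sub, mulVec_smul, hGx, smul_zero, sub_zero]
    abel
  · filter_upwards [hS] with a ha
    obtain ⟨B, hB⟩ : ∃ B, S a + c • 1 = B := ⟨_, rfl⟩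
    rw [hB] at ha ⊢
    rw [eq_sub_of_add_eq hB, Matrix.sub_mul, mul_nonsing_inv _ ((isUnit_iff_isUnit_det _).mp ha),
      smul_mul_assoc, Matrix.one_mul, sub_mulVec, one_mulVec, smul_mulVec]

end Limits

lemma posSemidef_transpose_mul_diagonal_mul (U : Matrix ι ι ℝ) {f : ι → ℝ}
    (hf : ∀ i, 0 ≤ f i) : (Uᵀ * diagonal f * U).PosSemidef := by
  rw [← conjTranspose_eq_transpose_of_trivial]
  exact (posSemidef_diagonal_iff.2 hf).conjTranspose_mul_mul_same U

lemma PosSemidef.diagonal_mul_mul_diagonal {A : Matrix ι ι ℝ} (hA : A.PosSemidef)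
    (x : ι → ℝ) : (diagonal x * A * diagonal x).PosSemidef := by
  have h := hA.mul_mul_conjTranspose_same (diagonal x)
  rwa [diagonal_conjTranspose, star_trivial] at h

end Matrix

/-- Kriging limit theorem for random walk smoothing: with `Γ = λ⁻¹I`,
`Σ = Π^{1/2} Δ̃⁺ Π^{1/2}`, `X = Π^{1/2} 1`, and
`M_δ = (XX'/δ + Σ)(XX'/δ + Σ + Γ)⁻¹`, the limit as `δ → 0⁺` of
`M_δ (Y* − μX) + μX` equals `(I + λ⁻¹ Π^{-1/2} Δ̃ Π^{-1/2})⁻¹ Y*`. -/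
theorem stmt14 {n : ℕ} (lam μ : ℝ) (hlam : 0 < lam)
    (pr : Fin (n + 1) → ℝ) (hpr : ∀ i, 0 < pr i)
    (d : Fin (n + 1) → ℝ)
    (hd : ∀ i, i ≠ Fin.last n → 0 < d i) (hdl : d (Fin.last n) = 0)
    (U : Matrix (Fin (n + 1)) (Fin (n + 1)) ℝ) (hU : Uᵀ * U = 1)
    (Lap : Matrix (Fin (n + 1)) (Fin (n + 1)) ℝ)
    (hLap : Lap = Uᵀ * Matrix.diagonal d * U)
    (hlast : (∀ i, U (Fin.last n) i = 1 / Real.sqrt (n + 1)) ∨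
             (∀ i, U (Fin.last n) i = -(1 / Real.sqrt (n + 1))))
    (Ystar : Fin (n + 1) → ℝ) :
    let X : Fin (n + 1) → ℝ := fun i => Real.sqrt (pr i)
    let Δplus : Matrix (Fin (n + 1)) (Fin (n + 1)) ℝ :=
      Uᵀ * Matrix.diagonal (fun i => if i = Fin.last n then 0 else (d i)⁻¹) * U
    let Sig : Matrix (Fin (n + 1)) (Fin (n + 1)) ℝ :=
      Matrix.diagonal X * Δplus * Matrix.diagonal X
    let Pinv : Matrix (Fin (n + 1)) (Fin (n + 1)) ℝ :=
      Matrix.diagonal fun i => (Real.sqrt (pr i))⁻¹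
    Tendsto (fun δ : ℝ =>
        ((δ⁻¹ • Matrix.vecMulVec X X + Sig) *
          (δ⁻¹ • Matrix.vecMulVec X X + Sig +
            lam⁻¹ • (1 : Matrix (Fin (n + 1)) (Fin (n + 1)) ℝ))⁻¹).mulVec (Ystar - μ • X)
          + μ • X)
      (nhdsWithin 0 (Set.Ioi 0))
      (nhds (((1 : Matrix (Fin (n + 1)) (Fin (n + 1)) ℝ) +
        lam⁻¹ • (Pinv * Lap * Pinv))⁻¹.mulVec Ystar)) := by
  intro X Δplus Sig Pinv
  subst hLap
  have hX : ∀ i, X i ≠ 0 := fun i => (Real.sqrt_pos.mpr (hpr i)).ne'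
  have hdd : (d * fun i => if i = Fin.last n then 0 else (d i)⁻¹) =
      1 - Pi.single (Fin.last n) 1 := by
    funext i
    by_cases hi : i = Fin.last n
    · simp [hi, hdl]
    · simp [hi, mul_inv_cancel₀ (hd i hi).ne']
  obtain ⟨c, hc, hrow⟩ : ∃ c : ℝ, c ≠ 0 ∧ U (Fin.last n) = fun _ => c := by
    rcases hlast with h | h
    · exact ⟨_, by positivity, funext h⟩
    · exact ⟨_, by simp; positivity, funext h⟩
  have hC : (Sig + lam⁻¹ • 1).PosDef := by
    refine PosDef.posSemidef_add (PosSemidef.diagonal_mul_mul_diagonal ?_ X)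
      (PosDef.one.smul (inv_pos.2 hlam))
    refine posSemidef_transpose_mul_diagonal_mul U fun i => ?_
    split_ifs with hi
    exacts [le_rfl, inv_nonneg.2 (hd i hi).le]
  have hs : 0 < X ⬝ᵥ (Sig + lam⁻¹ • 1)⁻¹ *ᵥ X :=
    hC.inv.dotProduct_mulVec_pos fun h => hX 0 (congrFun h 0)
  have hWSig : Pinv * (Uᵀ * diagonal d * U) * Pinv * Sig =
      1 - vecMulVec (c • Pinv *ᵥ U (Fin.last n)) X :=
    diagonal_inv_conj_mul_diagonal_conj hU hdd hrow hX
  have hWX : (Pinv * (Uᵀ * diagonal d * U) * Pinv) *ᵥ X = 0 :=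
    diagonal_inv_conj_mulVec_self hU hdl hrow hc hX
  rw [inv_one_add_smul_eq_sub_smul_rankOneInvLimit hC.isUnit hs.ne' hWSig hWX]
  refine tendsto_mul_inv_add_smul_one_mulVec ?_ ?_ (rankOneInvLimit_mulVec hs.ne') Ystar μ
  · filter_upwards [self_mem_nhdsWithin] with δ hδ
    rw [add_assoc]
    exact (hC.smul_vecMulVec_self_add (inv_nonneg.2 (le_of_lt hδ)) X).isUnit
  · simp_rw [add_assoc]
    exact (tendsto_inv_smul_vecMulVec_add_atTop hC.isUnit hs.ne').comp tendsto_inv_nhdsGT_zero
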